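/- arXiv:0903.1526 — 7 statements merged into one kernel-verified Lean document; each statement's English description precedes it below -/
import Mathlib

section
/- Let (X,d) be a metric space. Then the betweenness exponent t₀(d), defined as the supremum in [0,∞] of the set {t ∈ (0,∞) : the function (x,y) ↦ (d(x,y))^t is a metric on X}, equals the infimum in [0,∞] of the set {s ∈ [1,∞) : there exist x, y, z ∈ X with max{d(x,z), d(z,y)} < d(x,y) and (d(x,y))^s = (d(x,z))^s + (d(z,y))^s} (where the infimum of the empty set is ∞). -/
/-- `d` is a metric (distance function satisfying the metric axioms). -/
def IsMetricOn {α : Type*} (d : α → α → ℝ) : Prop :=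
  (∀ x, d x x = 0) ∧ (∀ x y, d x y = 0 → x = y) ∧ (∀ x y, d x y = d y x) ∧
    (∀ x y z, d x z ≤ d x y + d y z)

open ENNReal

/-!
For distances `0 < a, b < c` of a triple, `φ(s) = (a/c)^s + (b/c)^s` is strictly decreasing;
`c^s ≤ a^s + b^s` says `1 ≤ φ(s)` and `c^s = a^s + b^s` says `φ(s) = 1`. So the triangle
inequality for `d^t` holds on the triple exactly when `t` is at most the root of `φ = 1`, which
lies in `[1, ∞)` because `φ(1) ≥ 1` and `φ → 0`. Every other triple satisfies the triangle
inequality for all `t > 0` by monotonicity of `r ↦ r^t`.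
-/

namespace Real

lemma strictAnti_rpow_add_rpow {p q : ℝ} (hp₀ : 0 < p) (hp₁ : p < 1) (hq₀ : 0 < q)
    (hq₁ : q < 1) : StrictAnti fun s : ℝ => p ^ s + q ^ s :=
  (strictAnti_rpow_of_base_lt_one hp₀ hp₁).add (strictAnti_rpow_of_base_lt_one hq₀ hq₁)

lemma div_rpow_add_div_rpow {a b c : ℝ} (ha : 0 ≤ a) (hb : 0 ≤ b) (hc : 0 ≤ c) (s : ℝ) :
    (a / c) ^ s + (b / c) ^ s = (a ^ s + b ^ s) / c ^ s := by
  rw [div_rpow ha hc, div_rpow hb hc, add_div]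

lemma rpow_le_rpow_add_rpow_iff_le {a b c s t : ℝ} (ha : 0 < a) (hb : 0 < b) (hac : a < c)
    (hbc : b < c) (hs : c ^ s = a ^ s + b ^ s) : c ^ t ≤ a ^ t + b ^ t ↔ t ≤ s := by
  have hc : 0 < c := ha.trans hac
  have hφ := strictAnti_rpow_add_rpow (div_pos ha hc) ((div_lt_one hc).2 hac)
    (div_pos hb hc) ((div_lt_one hc).2 hbc)
  have hφs : (a / c) ^ s + (b / c) ^ s = 1 := by
    rw [div_rpow_add_div_rpow ha.le hb.le hc.le, ← hs, div_self (rpow_pos_of_pos hc s).ne']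
  rw [← one_le_div (rpow_pos_of_pos hc t), ← div_rpow_add_div_rpow ha.le hb.le hc.le, ← hφs]
  exact hφ.le_iff_ge

lemma exists_one_le_rpow_eq_rpow_add_rpow {a b c : ℝ} (ha : 0 < a) (hb : 0 < b) (hac : a < c)
    (hbc : b < c) (hcab : c ≤ a + b) : ∃ s : ℝ, 1 ≤ s ∧ c ^ s = a ^ s + b ^ s := by
  have hc : 0 < c := ha.trans hac
  set φ : ℝ → ℝ := fun s => (a / c) ^ s + (b / c) ^ s
  have hφ_cont : Continuous φ :=
    (continuous_const_rpow (div_pos ha hc).ne').add (continuous_const_rpow (div_pos hb hc).ne')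
  have hφ_one : 1 ≤ φ 1 := by
    simpa only [φ, rpow_one, ← add_div, one_le_div hc] using hcab
  have hφ_lim : Filter.Tendsto φ Filter.atTop (nhds 0) := by
    simpa using (tendsto_rpow_atTop_of_base_lt_one _ (neg_one_lt_zero.trans (div_pos ha hc))
      ((div_lt_one hc).2 hac)).add (tendsto_rpow_atTop_of_base_lt_one _
      (neg_one_lt_zero.trans (div_pos hb hc)) ((div_lt_one hc).2 hbc))
  obtain ⟨s, hs, hφs⟩ := isPreconnected_Ici.intermediate_value_Ioc Set.self_mem_Ici
    (Filter.le_principal_iff.2 (Filter.Ici_mem_atTop 1)) hφ_cont.continuousOn hφ_lim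
    ⟨zero_lt_one, hφ_one⟩
  refine ⟨s, hs, ?_⟩
  rwa [show φ s = _ from div_rpow_add_div_rpow ha.le hb.le hc.le s,
    div_eq_one_iff_eq (rpow_pos_of_pos hc s).ne', eq_comm] at hφs

end Real

section MetricSpace

variable {X : Type*} [MetricSpace X]

lemma dist_pos_of_max_dist_lt {x y z : X} (h : max (dist x z) (dist z y) < dist x y) :
    0 < dist x z ∧ 0 < dist z y := by
  refine ⟨dist_pos.2 fun hxz => ?_, dist_pos.2 fun hzy => ?_⟩
  · subst hxz
    exact lt_irrefl _ ((le_max_right _ _).trans_lt h)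
  · subst hzy
    exact lt_irrefl _ ((le_max_left _ _).trans_lt h)

lemma le_of_isMetricOn_rpow_dist {t s : ℝ} (ht : IsMetricOn fun x y : X => dist x y ^ t)
    {x y z : X} (hxyz : max (dist x z) (dist z y) < dist x y)
    (hs : dist x y ^ s = dist x z ^ s + dist z y ^ s) : t ≤ s := by
  obtain ⟨hxz, hzy⟩ := dist_pos_of_max_dist_lt hxyz
  obtain ⟨hxz_lt, hzy_lt⟩ := max_lt_iff.1 hxyz
  exact (Real.rpow_le_rpow_add_rpow_iff_le hxz hzy hxz_lt hzy_lt hs).1 (ht.2.2.2 x z y)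

lemma isMetricOn_rpow_dist_of_forall_le {t : ℝ} (ht : 0 < t)
    (h : ∀ x y z : X, max (dist x z) (dist z y) < dist x y →
      ∀ s, 1 ≤ s → dist x y ^ s = dist x z ^ s + dist z y ^ s → t ≤ s) :
    IsMetricOn fun x y : X => dist x y ^ t := by
  refine ⟨fun x => by simp [Real.zero_rpow ht.ne'], fun x y hxy => ?_,
    fun x y => by simp only [dist_comm], fun x y z => ?_⟩
  · exact dist_eq_zero.1 ((Real.rpow_eq_zero dist_nonneg ht.ne').1 hxy)
  rcases le_or_gt (dist x z) (max (dist x y) (dist y z)) with hle | hlt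
  · rcases le_max_iff.1 hle with hle | hle
    · exact (Real.rpow_le_rpow dist_nonneg hle ht.le).trans
        (le_add_of_nonneg_right (by positivity))
    · exact (Real.rpow_le_rpow dist_nonneg hle ht.le).trans
        (le_add_of_nonneg_left (by positivity))
  obtain ⟨hxy, hyz⟩ := dist_pos_of_max_dist_lt hlt
  obtain ⟨hxy_lt, hyz_lt⟩ := max_lt_iff.1 hlt
  obtain ⟨s, hs, hroot⟩ := Real.exists_one_le_rpow_eq_rpow_add_rpow hxy hyz hxy_lt hyz_lt
    (dist_triangle x y z)
  exact (Real.rpow_le_rpow_add_rpow_iff_le hxy hyz hxy_lt hyz_lt hroot).2 (h x z y hlt s hs hroot)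

end MetricSpace

/-- Proposition 1.2': the betweenness exponent `t₀(d)`, i.e. the supremum in `[0,∞]` of the
set of `t ∈ (0,∞)` for which `(x,y) ↦ d(x,y)^t` is a metric, equals the infimum in `[0,∞]`
of the set of `s ∈ [1,∞)` for which there are points `x, y, z` with
`max {d(x,z), d(z,y)} < d(x,y)` and `d(x,y)^s = d(x,z)^s + d(z,y)^s`. -/
theorem betweenness_exponent_eq {X : Type*} [MetricSpace X] :
    sSup {t : ℝ≥0∞ | ∃ r : ℝ, 0 < r ∧ t = ENNReal.ofReal r ∧
        IsMetricOn (fun x y : X => dist x y ^ r)} =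
      sInf {s : ℝ≥0∞ | ∃ r : ℝ, 1 ≤ r ∧ s = ENNReal.ofReal r ∧
        ∃ x y z : X, max (dist x z) (dist z y) < dist x y ∧
          dist x y ^ r = dist x z ^ r + dist z y ^ r} := by
  apply le_antisymm
  · refine sSup_le ?_
    rintro _ ⟨t, -, rfl, ht⟩
    refine le_sInf ?_
    rintro _ ⟨s, -, rfl, x, y, z, hxyz, hs⟩
    exact ofReal_le_ofReal (le_of_isMetricOn_rpow_dist ht hxyz hs)
  · refine le_of_forall_lt_imp_le_of_dense fun u hu => ?_
    rcases eq_zero_or_pos u with rfl | hu₀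
    · exact bot_le
    have hu_top : u ≠ ∞ := hu.ne_top
    have ht : 0 < u.toReal := toReal_pos hu₀.ne' hu_top
    refine le_sSup ⟨u.toReal, ht, (ofReal_toReal hu_top).symm,
      isMetricOn_rpow_dist_of_forall_le ht fun x y z hxyz s hs hroot => ?_⟩
    exact (toReal_lt_of_lt_ofReal (hu.trans_le (sInf_le ⟨s, hs, rfl, x, y, z, hxyz, hroot⟩))).le
end

section
/- Let (X,d) be a metric space. Then X is ultrametric if and only if for every W ⊆ X and every ε > 0 the equalities M*_ε(W) = N̂^X_ε(W) = N̂_ε(W) = M̂_ε(W) hold. -/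
/-!
For any metric space, `N̂ˣ_ε(W) ≤ N̂_ε(W) ≤ M̂_ε(W) ≤ M*_ε(W)`: a maximal `ε`-distinguishable
subset of `W` (which exists by Zorn's lemma) is an `ε`-net for `W`. In an ultrametric space two
points within `ε` of a common point are within `ε` of each other, so sending each point of an
`ε`-distinguishable subset of `W` to a nearby point of an `ε`-net is injective; this closes the
cycle with `M*_ε(W) ≤ N̂ˣ_ε(W)`. Conversely, if `d(x, z) > max (d(x, y), d(y, z))`, then at any
scale `ε` strictly in between, `{x, z}` is `ε`-distinguishable but covered by the single ball
around `y`, so `M*_ε({x, z}) = 2 > 1 ≥ N̂ˣ_ε({x, z})`.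
-/

open Cardinal Set

universe u

/-- `C` is an `ε`-net for `W` (w.r.t. the distance function `d`): every point of `W`
is within distance `ε` of some point of `C`. -/
def IsNet {α : Type u} (d : α → α → ℝ) (ε : ℝ) (W C : Set α) : Prop :=
  ∀ w ∈ W, ∃ c ∈ C, d w c ≤ ε

/-- `A` is `ε`-distinguishable: distinct points of `A` are at distance `> ε`. -/
def IsDistinguishable {α : Type u} (d : α → α → ℝ) (ε : ℝ) (A : Set α) : Prop :=
  ∀ x ∈ A, ∀ y ∈ A, x ≠ y → ε < d x y

/-- `N̂ᴬ_ε(W)`: the smallest cardinality of a set `C ⊆ A` which is an `ε`-net for `W`. -/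
noncomputable def coveringNumberIn {α : Type u} (d : α → α → ℝ) (ε : ℝ) (A W : Set α) :
    Cardinal.{u} :=
  sInf {κ | ∃ C : Set α, C ⊆ A ∧ IsNet d ε W C ∧ #C = κ}

/-- `M*_ε(W)`: the smallest cardinal `≥ card A` for every `ε`-distinguishable `A ⊆ W`. -/
noncomputable def packingNumberSup {α : Type u} (d : α → α → ℝ) (ε : ℝ) (W : Set α) :
    Cardinal.{u} :=
  sSup {κ | ∃ A : Set α, A ⊆ W ∧ IsDistinguishable d ε A ∧ #A = κ}

/-- `M̂_ε(W)`: the smallest cardinality of a maximal `ε`-distinguishable subset of `W`. -/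
noncomputable def maximalPackingInf {α : Type u} (d : α → α → ℝ) (ε : ℝ) (W : Set α) :
    Cardinal.{u} :=
  sInf {κ | ∃ A : Set α, A ⊆ W ∧ IsDistinguishable d ε A ∧
    (∀ B : Set α, B ⊆ W → IsDistinguishable d ε B → A ⊆ B → A = B) ∧ #A = κ}

section General

variable {α : Type u} {d : α → α → ℝ} {ε : ℝ} {A C W : Set α}

theorem exists_maximal_isDistinguishable (d : α → α → ℝ) (ε : ℝ) (W : Set α) :
    ∃ A ⊆ W, IsDistinguishable d ε A ∧
      ∀ B : Set α, B ⊆ W → IsDistinguishable d ε B → A ⊆ B → A = B := by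
  obtain ⟨A, hA⟩ := zorn_subset {A : Set α | A ⊆ W ∧ IsDistinguishable d ε A}
    fun c hc hchain => ⟨⋃₀ c, ⟨sUnion_subset fun s hs => (hc hs).1,
      hchain.pairwise_sUnion.2 fun s hs => (hc hs).2⟩, fun _ => subset_sUnion_of_mem⟩
  exact ⟨A, hA.prop.1, hA.prop.2, fun B hBW hB hAB => hA.eq_of_subset ⟨hBW, hB⟩ hAB⟩

theorem coveringNumberIn_le_mk (hCA : C ⊆ A) (hC : IsNet d ε W C) :
    coveringNumberIn d ε A W ≤ #C :=
  csInf_le' ⟨C, hCA, hC, rfl⟩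

theorem coveringNumberIn_anti {B : Set α} (hAB : A ⊆ B) (hA : ∃ C ⊆ A, IsNet d ε W C) :
    coveringNumberIn d ε B W ≤ coveringNumberIn d ε A W := by
  obtain ⟨C, hCA, hC⟩ := hA
  exact csInf_le_csInf' ⟨#C, C, hCA, hC, rfl⟩
    fun _ ⟨C', hC'A, hC', hκ⟩ => ⟨C', hC'A.trans hAB, hC', hκ⟩

theorem mk_le_packingNumberSup (hAW : A ⊆ W) (hA : IsDistinguishable d ε A) :
    #A ≤ packingNumberSup d ε W :=
  le_csSup ⟨#α, fun _ ⟨A', _, _, hκ⟩ => hκ ▸ mk_set_le A'⟩ ⟨A, hAW, hA, rfl⟩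

theorem maximalPackingInf_le_mk (hAW : A ⊆ W) (hA : IsDistinguishable d ε A)
    (hmax : ∀ B : Set α, B ⊆ W → IsDistinguishable d ε B → A ⊆ B → A = B) :
    maximalPackingInf d ε W ≤ #A :=
  csInf_le' ⟨A, hAW, hA, hmax, rfl⟩

theorem maximalPackingInf_le_packingNumberSup :
    maximalPackingInf d ε W ≤ packingNumberSup d ε W := by
  obtain ⟨A, hAW, hA, hmax⟩ := exists_maximal_isDistinguishable d ε W
  exact (maximalPackingInf_le_mk hAW hA hmax).trans (mk_le_packingNumberSup hAW hA)

end General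

section Metric

variable {X : Type u} [PseudoMetricSpace X] {ε : ℝ} {A C W : Set X}

theorem isNet_self (hε : 0 ≤ ε) (W : Set X) : IsNet dist ε W W :=
  fun w hw => ⟨w, hw, (dist_self w).le.trans hε⟩

theorem isNet_of_maximal (hε : 0 ≤ ε) (hAW : A ⊆ W) (hA : IsDistinguishable dist ε A)
    (hmax : ∀ B : Set X, B ⊆ W → IsDistinguishable dist ε B → A ⊆ B → A = B) :
    IsNet dist ε W A := by
  intro w hw
  by_contra! hfar
  have hwA : w ∉ A := fun hwA => (hfar w hwA).not_ge ((dist_self w).le.trans hε)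
  have hinsert : IsDistinguishable dist ε (insert w A) :=
    Set.Pairwise.insert hA fun a ha _ => ⟨hfar a ha, dist_comm a w ▸ hfar a ha⟩
  exact hwA (hmax _ (insert_subset hw hAW) hinsert (subset_insert w A) ▸ mem_insert w A)

theorem coveringNumberIn_self_le_maximalPackingInf (hε : 0 ≤ ε) :
    coveringNumberIn dist ε W W ≤ maximalPackingInf dist ε W := by
  refine le_csInf ?_ ?_
  · obtain ⟨A, hAW, hA, hmax⟩ := exists_maximal_isDistinguishable dist ε W
    exact ⟨#A, A, hAW, hA, hmax, rfl⟩
  · rintro _ ⟨A, hAW, hA, hmax, rfl⟩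
    exact coveringNumberIn_le_mk hAW (isNet_of_maximal hε hAW hA hmax)

theorem mk_le_mk_of_isDistinguishable_of_isNet [IsUltrametricDist X] (hAW : A ⊆ W)
    (hA : IsDistinguishable dist ε A) (hC : IsNet dist ε W C) : #A ≤ #C := by
  choose f hfC hf using fun a : A => hC a (hAW a.2)
  refine mk_le_of_injective (f := fun a => (⟨f a, hfC a⟩ : C)) fun a b hab => ?_
  have hab : f a = f b := congrArg Subtype.val hab
  by_contra hne
  refine (hA a a.2 b b.2 (Subtype.coe_ne_coe.2 hne)).not_ge ?_
  calc dist (a : X) b ≤ max (dist (a : X) (f a)) (dist (f a) b) := dist_triangle_max _ _ _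
    _ ≤ ε := max_le (hf a) (hab ▸ dist_comm (b : X) (f b) ▸ hf b)

theorem packingNumberSup_le_coveringNumberIn_univ [IsUltrametricDist X] (hε : 0 ≤ ε) :
    packingNumberSup dist ε W ≤ coveringNumberIn dist ε univ W := by
  refine le_csInf ⟨#W, W, subset_univ W, isNet_self hε W, rfl⟩ ?_
  rintro _ ⟨C, -, hC, rfl⟩
  exact csSup_le' fun _ ⟨A, hAW, hA, hκ⟩ => hκ ▸ mk_le_mk_of_isDistinguishable_of_isNet hAW hA hC

theorem coveringNumberIn_univ_le_coveringNumberIn_self (hε : 0 ≤ ε) :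
    coveringNumberIn dist ε univ W ≤ coveringNumberIn dist ε W W :=
  coveringNumberIn_anti (subset_univ W) ⟨W, subset_rfl, isNet_self hε W⟩

theorem two_le_packingNumberSup_pair {x z : X} (hε : 0 ≤ ε) (hxz : ε < dist x z) :
    2 ≤ packingNumberSup dist ε {x, z} := by
  have hne : x ≠ z := fun h => (h ▸ hxz).not_ge (by rwa [dist_self])
  have hpair : IsDistinguishable dist ε {x, z} :=
    pairwise_pair.2 fun _ => ⟨hxz, dist_comm x z ▸ hxz⟩
  calc (2 : Cardinal) = #({x, z} : Set X) := by
        rw [mk_insert (mt mem_singleton_iff.1 hne), mk_singleton, one_add_one_eq_two]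
    _ ≤ _ := mk_le_packingNumberSup subset_rfl hpair

theorem coveringNumberIn_univ_pair_le_one {x y z : X} (hxy : dist x y ≤ ε) (hyz : dist y z ≤ ε) :
    coveringNumberIn dist ε univ {x, z} ≤ 1 := by
  have hnet : IsNet dist ε {x, z} {y} := by
    rintro w (rfl | rfl)
    · exact ⟨y, rfl, hxy⟩
    · exact ⟨y, rfl, dist_comm w y ▸ hyz⟩
  exact mk_singleton y ▸ coveringNumberIn_le_mk (subset_univ _) hnet

theorem isUltrametricDist_of_packingNumberSup_le_coveringNumberIn_univ
    (h : ∀ (W : Set X) (ε : ℝ), 0 < ε →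
      packingNumberSup dist ε W ≤ coveringNumberIn dist ε univ W) :
    IsUltrametricDist X := by
  refine ⟨fun x y z => ?_⟩
  by_contra! hxz
  obtain ⟨ε, hδε, hεxz⟩ := exists_between hxz
  have hε : 0 < ε := (le_max_of_le_left dist_nonneg).trans_lt hδε
  have := calc (2 : Cardinal)
      ≤ packingNumberSup dist ε {x, z} := two_le_packingNumberSup_pair hε.le hεxz
    _ ≤ coveringNumberIn dist ε univ {x, z} := h _ _ hε
    _ ≤ 1 := coveringNumberIn_univ_pair_le_one (le_max_left _ _ |>.trans hδε.le)
        (le_max_right _ _ |>.trans hδε.le)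
  exact absurd this (by norm_num)

end Metric

/-- Theorem 1.6, (i) ⇔ (ii): a metric space `X` is ultrametric if and only if for every
`W ⊆ X` and every `ε > 0` the equalities `M*_ε(W) = N̂ˣ_ε(W) = N̂_ε(W) = M̂_ε(W)` hold. -/
theorem ultrametric_iff_covering_eq_packing {X : Type u} [MetricSpace X] :
    (∀ x y z : X, dist x z ≤ max (dist x y) (dist y z)) ↔
      ∀ (W : Set X) (ε : ℝ), 0 < ε →
        packingNumberSup dist ε W = coveringNumberIn dist ε Set.univ W ∧
        coveringNumberIn dist ε Set.univ W = coveringNumberIn dist ε W W ∧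
        coveringNumberIn dist ε W W = maximalPackingInf dist ε W := by
  refine ⟨fun hu W ε hε => ?_, fun h => ?_⟩
  · have : IsUltrametricDist X := ⟨hu⟩
    have h₁ := packingNumberSup_le_coveringNumberIn_univ (W := W) hε.le
    have h₂ := coveringNumberIn_univ_le_coveringNumberIn_self (W := W) hε.le
    have h₃ := coveringNumberIn_self_le_maximalPackingInf (W := W) hε.le
    have h₄ := maximalPackingInf_le_packingNumberSup (d := dist) (ε := ε) (W := W)
    exact ⟨h₁.antisymm (h₂.trans (h₃.trans h₄)), h₂.antisymm (h₃.trans (h₄.trans h₁)),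
      h₃.antisymm (h₄.trans (h₁.trans h₂))⟩
  · exact (isUltrametricDist_of_packingNumberSup_le_coveringNumberIn_univ
      fun W ε hε => (h W ε hε).1.le).dist_triangle_max
end

section
/- Let (X,d_X) and (Y,d_Y) be nonempty metric spaces and let d be a partial distance-preserving metric on X × Y such that max{d_X(x₁,x₂), d_Y(y₁,y₂)} ≤ d((x₁,y₁),(x₂,y₂)) for all (x₁,y₁), (x₂,y₂) ∈ X × Y. Then d is an ultrametric if and only if d_X and d_Y are ultrametrics and d((x₁,y₁),(x₂,y₂)) = max{d_X(x₁,x₂), d_Y(y₁,y₂)} for all (x₁,y₁), (x₂,y₂) ∈ X × Y. -/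
/-- `d` satisfies the ultra-triangle inequality. -/
def IsUltrametricOn {α : Type*} (d : α → α → ℝ) : Prop :=
  ∀ x y z, d x z ≤ max (d x y) (d y z)

/-- `d` is a partial distance-preserving distance function on `X × Y`. -/
def PartialDistPreserving {X Y : Type*} [MetricSpace X] [MetricSpace Y]
    (d : X × Y → X × Y → ℝ) : Prop :=
  (∀ (x₁ x₂ : X) (y : Y), d (x₁, y) (x₂, y) = dist x₁ x₂) ∧
    (∀ (x : X) (y₁ y₂ : Y), d (x, y₁) (x, y₂) = dist y₁ y₂)

/-- `d` is a distance-increasing distance function on `X × Y`. -/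
def DistanceIncreasing {X Y : Type*} [MetricSpace X] [MetricSpace Y]
    (d : X × Y → X × Y → ℝ) : Prop :=
  ∀ (x₁ x₂ x₃ x₄ : X) (y₁ y₂ y₃ y₄ : Y),
    dist x₁ x₂ ≤ dist x₃ x₄ → dist y₁ y₂ ≤ dist y₃ y₄ →
      d (x₁, y₁) (x₂, y₂) ≤ d (x₃, y₃) (x₄, y₄)

theorem IsUltrametricOn.prod_max {X Y : Type*} {dX : X → X → ℝ} {dY : Y → Y → ℝ}
    (hX : IsUltrametricOn dX) (hY : IsUltrametricOn dY) :
    IsUltrametricOn fun p q : X × Y => max (dX p.1 q.1) (dY p.2 q.2) := fun p q r =>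
  max_le ((hX p.1 q.1 r.1).trans (max_le_max (le_max_left _ _) (le_max_left _ _)))
    ((hY p.2 q.2 r.2).trans (max_le_max (le_max_right _ _) (le_max_right _ _)))

namespace PartialDistPreserving

variable {X Y : Type*} [MetricSpace X] [MetricSpace Y] {d : X × Y → X × Y → ℝ}

theorem isUltrametricOn_dist_fst (hpdp : PartialDistPreserving d) (hu : IsUltrametricOn d)
    (y : Y) : IsUltrametricOn (dist : X → X → ℝ) := fun x₁ x₂ x₃ => by
  simpa only [hpdp.1] using hu (x₁, y) (x₂, y) (x₃, y)

theorem isUltrametricOn_dist_snd (hpdp : PartialDistPreserving d) (hu : IsUltrametricOn d)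
    (x : X) : IsUltrametricOn (dist : Y → Y → ℝ) := fun y₁ y₂ y₃ => by
  simpa only [hpdp.2] using hu (x, y₁) (x, y₂) (x, y₃)

/-- Pass from `p` to `q` through the corner `(q.1, p.2)`. -/
theorem le_max_dist_of_isUltrametricOn (hpdp : PartialDistPreserving d)
    (hu : IsUltrametricOn d) (p q : X × Y) :
    d p q ≤ max (dist p.1 q.1) (dist p.2 q.2) := by
  simpa only [hpdp.1, hpdp.2] using hu (p.1, p.2) (q.1, p.2) (q.1, q.2)

end PartialDistPreserving

theorem ultrametric_iff_max_of_pdp_general {X Y : Type*} [MetricSpace X] [MetricSpace Y]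
    [Nonempty X] [Nonempty Y] (d : X × Y → X × Y → ℝ)
    (hpdp : PartialDistPreserving d)
    (hlow : ∀ p q : X × Y, max (dist p.1 q.1) (dist p.2 q.2) ≤ d p q) :
    IsUltrametricOn d ↔
      ((∀ x y z : X, dist x z ≤ max (dist x y) (dist y z)) ∧
       (∀ x y z : Y, dist x z ≤ max (dist x y) (dist y z)) ∧
       ∀ p q : X × Y, d p q = max (dist p.1 q.1) (dist p.2 q.2)) := by
  constructor
  · intro hu
    exact ⟨hpdp.isUltrametricOn_dist_fst hu (Classical.arbitrary Y),
      hpdp.isUltrametricOn_dist_snd hu (Classical.arbitrary X),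
      fun p q => (hpdp.le_max_dist_of_isUltrametricOn hu p q).antisymm (hlow p q)⟩
  · rintro ⟨hXu, hYu, hmax⟩
    have hd : d = fun p q : X × Y => max (dist p.1 q.1) (dist p.2 q.2) :=
      funext fun p => funext (hmax p)
    exact hd ▸ IsUltrametricOn.prod_max hXu hYu

/-- Theorem 2.8: if `d` is a partial distance-preserving metric on `X × Y` with `d_∞ ≤ d`,
then `d` is an ultrametric iff `d_X` and `d_Y` are ultrametrics and `d = d_∞`. -/
theorem ultrametric_iff_max_of_pdp {X Y : Type*} [MetricSpace X] [MetricSpace Y]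
    [Nonempty X] [Nonempty Y] (d : X × Y → X × Y → ℝ) (hmetric : IsMetricOn d)
    (hpdp : PartialDistPreserving d)
    (hlow : ∀ p q : X × Y, max (dist p.1 q.1) (dist p.2 q.2) ≤ d p q) :
    IsUltrametricOn d ↔
      ((∀ x y z : X, dist x z ≤ max (dist x y) (dist y z)) ∧
       (∀ x y z : Y, dist x z ≤ max (dist x y) (dist y z)) ∧
       ∀ p q : X × Y, d p q = max (dist p.1 q.1) (dist p.2 q.2)) :=
  ultrametric_iff_max_of_pdp_general d hpdp hlow
end

section
/- Let (X,d_X) and (Y,d_Y) be nonempty metric spaces and let d be a distance-increasing and partial distance-preserving metric on the product X × Y. Then d is an ultrametric if and only if d_X and d_Y are ultrametrics and d((x₁,y₁),(x₂,y₂)) = max{d_X(x₁,x₂), d_Y(y₁,y₂)} for all (x₁,y₁), (x₂,y₂) ∈ X × Y. -/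
namespace IsUltrametricOn

variable {α β : Type*}

theorem comp {d : α → α → ℝ} (hd : IsUltrametricOn d) (f : β → α) :
    IsUltrametricOn fun a b => d (f a) (f b) :=
  fun a b c => hd (f a) (f b) (f c)

theorem prodMax {dα : α → α → ℝ} {dβ : β → β → ℝ} (hα : IsUltrametricOn dα)
    (hβ : IsUltrametricOn dβ) :
    IsUltrametricOn fun p q : α × β => max (dα p.1 q.1) (dβ p.2 q.2) := fun p q r =>
  max_le ((hα p.1 q.1 r.1).trans (max_le_max (le_max_left _ _) (le_max_left _ _)))
    ((hβ p.2 q.2 r.2).trans (max_le_max (le_max_right _ _) (le_max_right _ _)))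

end IsUltrametricOn

namespace PartialDistPreserving

variable {X Y : Type*} [MetricSpace X] [MetricSpace Y] {d : X × Y → X × Y → ℝ}

theorem max_dist_le_of_distanceIncreasing (hpdp : PartialDistPreserving d)
    (hinc : DistanceIncreasing d) (p q : X × Y) :
    max (dist p.1 q.1) (dist p.2 q.2) ≤ d p q := by
  obtain ⟨x₁, y₁⟩ := p
  obtain ⟨x₂, y₂⟩ := q
  refine max_le ?_ ?_
  · calc dist x₁ x₂ = d (x₁, y₁) (x₂, y₁) := (hpdp.1 x₁ x₂ y₁).symm
      _ ≤ d (x₁, y₁) (x₂, y₂) :=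
        hinc _ _ _ _ _ _ _ _ le_rfl ((dist_self y₁).trans_le dist_nonneg)
  · calc dist y₁ y₂ = d (x₁, y₁) (x₁, y₂) := (hpdp.2 x₁ y₁ y₂).symm
      _ ≤ d (x₁, y₁) (x₂, y₂) :=
        hinc _ _ _ _ _ _ _ _ ((dist_self x₁).trans_le dist_nonneg) le_rfl

theorem isUltrametricOn_dist_left [Nonempty Y] (hpdp : PartialDistPreserving d)
    (hu : IsUltrametricOn d) : IsUltrametricOn (dist : X → X → ℝ) := by
  obtain ⟨y⟩ := ‹Nonempty Y›
  simpa only [hpdp.1] using hu.comp (·, y)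

theorem isUltrametricOn_dist_right [Nonempty X] (hpdp : PartialDistPreserving d)
    (hu : IsUltrametricOn d) : IsUltrametricOn (dist : Y → Y → ℝ) := by
  obtain ⟨x⟩ := ‹Nonempty X›
  simpa only [hpdp.2] using hu.comp (x, ·)

end PartialDistPreserving

theorem ultrametric_iff_max_of_distanceIncreasing_general {X Y : Type*} [MetricSpace X]
    [MetricSpace Y] [Nonempty X] [Nonempty Y] (d : X × Y → X × Y → ℝ)
    (hinc : DistanceIncreasing d) (hpdp : PartialDistPreserving d) :
    IsUltrametricOn d ↔
      ((∀ x y z : X, dist x z ≤ max (dist x y) (dist y z)) ∧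
       (∀ x y z : Y, dist x z ≤ max (dist x y) (dist y z)) ∧
       ∀ p q : X × Y, d p q = max (dist p.1 q.1) (dist p.2 q.2)) := by
  constructor
  · intro hu
    refine ⟨hpdp.isUltrametricOn_dist_left hu, hpdp.isUltrametricOn_dist_right hu,
      fun p q => ?_⟩
    exact (hpdp.le_max_dist_of_isUltrametricOn hu p q).antisymm
      (hpdp.max_dist_le_of_distanceIncreasing hinc p q)
  · rintro ⟨hX, hY, hd⟩
    rw [show d = _ from funext₂ hd]
    exact IsUltrametricOn.prodMax hX hY

/-- Corollary 2.9: if `d` is a distance-increasing, partial distance-preserving metric on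
`X × Y`, then `d` is an ultrametric iff `d_X` and `d_Y` are ultrametrics and `d = d_∞`. -/
theorem ultrametric_iff_max_of_distanceIncreasing {X Y : Type*} [MetricSpace X]
    [MetricSpace Y] [Nonempty X] [Nonempty Y] (d : X × Y → X × Y → ℝ)
    (hmetric : IsMetricOn d) (hinc : DistanceIncreasing d) (hpdp : PartialDistPreserving d) :
    IsUltrametricOn d ↔
      ((∀ x y z : X, dist x z ≤ max (dist x y) (dist y z)) ∧
       (∀ x y z : Y, dist x z ≤ max (dist x y) (dist y z)) ∧
       ∀ p q : X × Y, d p q = max (dist p.1 q.1) (dist p.2 q.2)) :=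
  ultrametric_iff_max_of_distanceIncreasing_general d hinc hpdp
end

section
/- Let (X,d_X) and (Y,d_Y) be nonempty ultrametric spaces and let d be a partial distance-preserving metric on X × Y such that max{d_X(x₁,x₂), d_Y(y₁,y₂)} ≤ d((x₁,y₁),(x₂,y₂)) for all (x₁,y₁), (x₂,y₂) ∈ X × Y. Then d is an ultrametric if and only if for all compact sets W ⊆ X, Z ⊆ Y and every ε > 0 the equality M_ε(W × Z) = M_ε(W) · M_ε(Z) holds, where the packing number on W × Z is computed with respect to the metric d. -/
open Cardinal Set

universe u

/-!
If `d` is an ultrametric, the ultrametric inequality through `(x₂, y₁)` and the partial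
distance preservation give `d ≤ max (d_X, d_Y)`, so `d` is the max metric. In an ultrametric
space, "at distance `≤ ε`" is an equivalence relation and `M_ε(S)` is the number of its classes;
for the max metric the classes of `W × Z` are the products of classes of `W` and of `Z`.
Conversely, if `d (x₁, y₁) (x₂, y₂)` exceeds the max metric, pick `ε` strictly in between: the two
points form an `ε`-distinguishable subset of `{x₁, x₂} × {y₁, y₂}`, while each factor has packing
number `1`. Hence `d` is the max metric, which is an ultrametric.
-/

section Packing

variable {α : Type u} {ρ : α → α → ℝ} {ε : ℝ} {S : Set α}

theorem le_packingNumberSup {A : Set α} (hAS : A ⊆ S) (hA : IsDistinguishable ρ ε A) :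
    #A ≤ packingNumberSup ρ ε S :=
  le_csSup ⟨#α, by rintro _ ⟨B, -, -, rfl⟩; exact mk_set_le B⟩ ⟨A, hAS, hA, rfl⟩

theorem packingNumberSup_le {κ : Cardinal.{u}}
    (h : ∀ A ⊆ S, IsDistinguishable ρ ε A → #A ≤ κ) : packingNumberSup ρ ε S ≤ κ :=
  csSup_le ⟨_, ∅, empty_subset S, fun _ hx => hx.elim, rfl⟩ (by
    rintro _ ⟨A, hAS, hA, rfl⟩; exact h A hAS hA)

theorem packingNumberSup_eq_one (hS : S.Nonempty) (h : ∀ x ∈ S, ∀ y ∈ S, ρ x y ≤ ε) :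
    packingNumberSup ρ ε S = 1 := by
  refine le_antisymm (packingNumberSup_le fun A hAS hA => ?_) ?_
  · refine le_one_iff_subsingleton.2 ⟨fun x y => Subtype.ext ?_⟩
    by_contra hxy
    exact (hA x x.2 y y.2 hxy).not_ge (h x (hAS x.2) y (hAS y.2))
  · obtain ⟨x, hx⟩ := hS
    calc (1 : Cardinal) = #({x} : Set α) := (mk_singleton x).symm
      _ ≤ _ := le_packingNumberSup (singleton_subset_iff.2 hx) fun _ hu _ hv huv =>
          (huv ((mem_singleton_iff.1 hu).trans (mem_singleton_iff.1 hv).symm)).elim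

theorem isDistinguishable_pair {a b : α} (hab : ε < ρ a b) (hba : ε < ρ b a) :
    IsDistinguishable ρ ε {a, b} := by
  rintro _ (rfl | rfl) _ (rfl | rfl) h <;> first | exact (h rfl).elim | assumption

/-- A maximal `ε`-distinguishable subset picks one point from each class, and any
`ε`-distinguishable subset meets each class at most once. -/
theorem packingNumberSup_eq_mk_quotient (s : Setoid S) (h : ∀ u v : S, s u v ↔ ρ u v ≤ ε) :
    packingNumberSup ρ ε S = #(Quotient s) := by
  refine le_antisymm (packingNumberSup_le fun A hAS hA => ?_) ?_
  · refine mk_le_of_injective (f := fun a : A => (⟦⟨a, hAS a.2⟩⟧ : Quotient s)) fun a b hab => ?_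
    by_contra hne
    exact (hA a a.2 b b.2 (Subtype.coe_ne_coe.2 hne)).not_ge ((h _ _).1 (Quotient.exact hab))
  · let rep : Quotient s → α := fun q => q.out
    have hrep : rep.Injective := fun q₁ q₂ hq => by
      rw [← Quotient.out_eq q₁, ← Quotient.out_eq q₂, Subtype.ext hq]
    calc #(Quotient s) = #(range rep) := (mk_range_eq rep hrep).symm
      _ ≤ _ := le_packingNumberSup (by rintro _ ⟨q, rfl⟩; exact q.out.2) (by
          rintro _ ⟨q₁, rfl⟩ _ ⟨q₂, rfl⟩ hne
          by_contra! hle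
          refine hne (congrArg rep ?_)
          rw [← Quotient.out_eq q₁, ← Quotient.out_eq q₂]
          exact Quotient.sound ((h _ _).2 hle))

end Packing

instance Prod.isUltrametricDist {X Y : Type*} [PseudoMetricSpace X] [PseudoMetricSpace Y]
    [IsUltrametricDist X] [IsUltrametricDist Y] : IsUltrametricDist (X × Y) :=
  ⟨fun p q r => max_le
    ((dist_triangle_max p.1 q.1 r.1).trans (max_le_max (le_max_left _ _) (le_max_left _ _)))
    ((dist_triangle_max p.2 q.2 r.2).trans (max_le_max (le_max_right _ _) (le_max_right _ _)))⟩

namespace IsUltrametricDist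

def closeSetoid (X : Type*) [PseudoMetricSpace X] [IsUltrametricDist X] {ε : ℝ} (hε : 0 ≤ ε) :
    Setoid X where
  r x y := dist x y ≤ ε
  iseqv :=
    ⟨fun x => (dist_self x).le.trans hε, fun h => (dist_comm _ _).trans_le h,
      fun h₁ h₂ => (dist_triangle_max _ _ _).trans (max_le h₁ h₂)⟩

variable {X Y : Type u} [PseudoMetricSpace X] [PseudoMetricSpace Y]
  [IsUltrametricDist X] [IsUltrametricDist Y] {ε : ℝ}

theorem packingNumberSup_eq_mk_quotient_closeSetoid (hε : 0 ≤ ε) (S : Set X) :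
    packingNumberSup dist ε S = #(Quotient (closeSetoid S hε)) :=
  packingNumberSup_eq_mk_quotient _ fun _ _ => Iff.rfl

theorem packingNumberSup_prod (hε : 0 ≤ ε) (W : Set X) (Z : Set Y) :
    packingNumberSup dist ε (W ×ˢ Z) = packingNumberSup dist ε W * packingNumberSup dist ε Z := by
  have e : Quotient (closeSetoid (W ×ˢ Z : Set (X × Y)) hε) ≃
      Quotient (closeSetoid W hε) × Quotient (closeSetoid Z hε) :=
    (Quotient.congr (Equiv.Set.prod W Z) fun _ _ => max_le_iff).trans
      (Setoid.prodQuotientEquiv _ _).symm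
  simp only [packingNumberSup_eq_mk_quotient_closeSetoid hε, mk_congr e, mk_prod, lift_id]

end IsUltrametricDist

theorem IsUltrametricOn.le_dist_prod {X Y : Type*} [MetricSpace X] [MetricSpace Y]
    {d : X × Y → X × Y → ℝ} (hd : IsUltrametricOn d) (hpdp : PartialDistPreserving d)
    (p q : X × Y) : d p q ≤ dist p q := by
  have h := hd p (q.1, p.2) q
  rwa [hpdp.1, hpdp.2] at h

theorem le_dist_of_packingNumberSup_pair_mul {X Y : Type u} [PseudoMetricSpace X]
    [PseudoMetricSpace Y] {d : X × Y → X × Y → ℝ} (hdiag : ∀ p, d p p = 0)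
    (hsymm : ∀ p q, d p q = d q p) (p q : X × Y)
    (hmul : ∀ ε > 0, packingNumberSup d ε ({p.1, q.1} ×ˢ {p.2, q.2}) =
      packingNumberSup dist ε {p.1, q.1} * packingNumberSup dist ε {p.2, q.2}) :
    d p q ≤ dist p q := by
  by_contra! hlt
  obtain ⟨ε, hpq, hqp⟩ := exists_between hlt
  have hne : p ≠ q := by rintro rfl; simp [hdiag] at hlt
  have hpair {γ : Type u} [PseudoMetricSpace γ] {a b : γ} (hab : dist a b ≤ ε) :
      packingNumberSup dist ε {a, b} = 1 :=
    packingNumberSup_eq_one (insert_nonempty a {b}) (by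
      have hε : 0 ≤ ε := dist_nonneg.trans hpq.le
      rintro _ (rfl | rfl) _ (rfl | rfl) <;> simp_all [dist_comm])
  have h2 : 2 ≤ packingNumberSup d ε ({p.1, q.1} ×ˢ {p.2, q.2}) :=
    calc (2 : Cardinal) = #({p, q} : Set (X × Y)) := by
          rw [mk_insert (by simpa using hne), mk_singleton, one_add_one_eq_two]
      _ ≤ _ := le_packingNumberSup (by rintro _ (rfl | rfl) <;> simp)
          (isDistinguishable_pair hqp (hsymm p q ▸ hqp))
  rw [hmul ε (dist_nonneg.trans_lt hpq),
    hpair ((le_max_left _ _).trans hpq.le), hpair ((le_max_right _ _).trans hpq.le),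
    mul_one] at h2
  norm_num at h2

theorem ultrametric_iff_packing_multiplicative_general {X Y : Type u} [MetricSpace X] [MetricSpace Y]
    (hX : ∀ x y z : X, dist x z ≤ max (dist x y) (dist y z))
    (hY : ∀ x y z : Y, dist x z ≤ max (dist x y) (dist y z))
    (d : X × Y → X × Y → ℝ) (hmetric : IsMetricOn d) (hpdp : PartialDistPreserving d)
    (hlow : ∀ p q : X × Y, max (dist p.1 q.1) (dist p.2 q.2) ≤ d p q) :
    IsUltrametricOn d ↔
      ∀ (W : Set X) (Z : Set Y), IsCompact W → IsCompact Z → ∀ ε : ℝ, 0 < ε →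
        packingNumberSup d ε (W ×ˢ Z) =
          packingNumberSup dist ε W * packingNumberSup dist ε Z := by
  have : IsUltrametricDist X := ⟨hX⟩
  have : IsUltrametricDist Y := ⟨hY⟩
  constructor
  · intro hult W Z _ _ ε hε
    obtain rfl : d = dist := funext₂ fun p q => (hult.le_dist_prod hpdp p q).antisymm (hlow p q)
    exact IsUltrametricDist.packingNumberSup_prod hε.le W Z
  · intro hmul
    obtain rfl : d = dist := funext₂ fun p q =>
      (le_dist_of_packingNumberSup_pair_mul hmetric.1 hmetric.2.2.1 p q fun ε hε =>
        hmul _ _ (toFinite _).isCompact (toFinite _).isCompact ε hε).antisymm (hlow p q)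
    exact dist_triangle_max

/-- Theorem 3.1: for ultrametric spaces `X`, `Y` and a partial distance-preserving metric
`d ≥ d_∞` on `X × Y`, `d` is an ultrametric iff the packing numbers are multiplicative:
`M_ε(W × Z) = M_ε(W) · M_ε(Z)` for all compact `W ⊆ X`, `Z ⊆ Y` and all `ε > 0`. -/
theorem ultrametric_iff_packing_multiplicative {X Y : Type u} [MetricSpace X] [MetricSpace Y]
    [Nonempty X] [Nonempty Y]
    (hX : ∀ x y z : X, dist x z ≤ max (dist x y) (dist y z))
    (hY : ∀ x y z : Y, dist x z ≤ max (dist x y) (dist y z))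
    (d : X × Y → X × Y → ℝ) (hmetric : IsMetricOn d) (hpdp : PartialDistPreserving d)
    (hlow : ∀ p q : X × Y, max (dist p.1 q.1) (dist p.2 q.2) ≤ d p q) :
    IsUltrametricOn d ↔
      ∀ (W : Set X) (Z : Set Y), IsCompact W → IsCompact Z → ∀ ε : ℝ, 0 < ε →
        packingNumberSup d ε (W ×ˢ Z) =
          packingNumberSup dist ε W * packingNumberSup dist ε Z :=
  ultrametric_iff_packing_multiplicative_general hX hY d hmetric hpdp hlow
end

section
/- Let (X,d_X), (Y,d_Y) be ultrametric spaces and let d be a partial distance-preserving ultrametric on X × Y with max{d_X(x₁,x₂), d_Y(y₁,y₂)} ≤ d((x₁,y₁),(x₂,y₂)) for all (x₁,y₁), (x₂,y₂) ∈ X × Y. Then for all compact sets W ⊆ X, Z ⊆ Y and every ε > 0 the equalities M_ε(W × Z) = M_ε(W) · M_ε(Z), N_ε(W × Z) = N_ε(W) · N_ε(Z) and M_ε(W × Z) = N_ε(W × Z) hold, where the quantities on W × Z are computed with respect to the metric d. -/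
/-!
Going through the corner `(x₂, y₁)`, the ultrametric inequality forces `d` to be the maximum
metric. In an ultrametric space a maximal `ε`-distinguishable subset `A` of `W` is an `ε`-net,
and every `ε`-distinguishable subset of `W` injects into every `ε`-net of `W`; so the packing and
covering numbers of `W` both equal `#A`. For the maximum metric, the product of such sets for `W`
and `Z` is such a set for `W × Z`.
-/

open Cardinal Set

universe u

section Packing

variable {α : Type u} {d : α → α → ℝ} {ε : ℝ} {W A C : Set α}

/-- In an ultrametric, two points within `ε` of the same centre are within `ε` of each other,
so a choice of covering centres is injective on an `ε`-distinguishable set. -/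
lemma IsDistinguishable.mk_le_of_isNet (hsymm : ∀ x y, d x y = d y x)
    (hultra : IsUltrametricOn d) (hA : A ⊆ W) (hAd : IsDistinguishable d ε A)
    (hC : IsNet d ε W C) : #A ≤ #C := by
  choose f hfC hf using fun a : A => hC a (hA a.2)
  refine Cardinal.mk_le_of_injective (f := fun a => (⟨f a, hfC a⟩ : C)) fun a b hab => ?_
  by_contra hne
  have hab' : f a = f b := congrArg Subtype.val hab
  have hclose : d a b ≤ ε := calc
    d a b ≤ max (d a (f a)) (d (f a) b) := hultra _ _ _
    _ ≤ ε := max_le (hf a) (by rw [hab', hsymm]; exact hf b)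
  exact (hAd a a.2 b b.2 (Subtype.coe_injective.ne hne)).not_ge hclose

lemma exists_isDistinguishable_isNet (hrefl : ∀ x, d x x = 0) (hsymm : ∀ x y, d x y = d y x)
    (hε : 0 ≤ ε) (W : Set α) : ∃ A ⊆ W, IsDistinguishable d ε A ∧ IsNet d ε W A := by
  obtain ⟨A, ⟨hAW, hAd⟩, hAmax⟩ := zorn_subset {A | A ⊆ W ∧ IsDistinguishable d ε A}
    fun c hcS hc => ⟨⋃₀ c, ⟨sUnion_subset fun s hs => (hcS hs).1,
      hc.pairwise_sUnion.2 fun s hs => (hcS hs).2⟩, fun _ => subset_sUnion_of_mem⟩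
  refine ⟨A, hAW, hAd, fun w hw => ?_⟩
  by_contra! hfar
  have hinsert : insert w A ∈ {A | A ⊆ W ∧ IsDistinguishable d ε A} :=
    ⟨insert_subset hw hAW,
      pairwise_insert.2 ⟨hAd, fun a ha _ => ⟨hfar a ha, hsymm a w ▸ hfar a ha⟩⟩⟩
  have hwA : w ∈ A := hAmax hinsert (subset_insert w A) (mem_insert w A)
  exact (hfar w hwA).not_ge (hrefl w ▸ hε)

variable (hsymm : ∀ x y, d x y = d y x) (hultra : IsUltrametricOn d)
include hsymm hultra

lemma packingNumberSup_eq_mk (hA : A ⊆ W) (hAd : IsDistinguishable d ε A)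
    (hAn : IsNet d ε W A) : packingNumberSup d ε W = #A := by
  have hbound : ∀ κ ∈ {κ | ∃ B ⊆ W, IsDistinguishable d ε B ∧ #B = κ}, κ ≤ #A := by
    rintro _ ⟨B, hB, hBd, rfl⟩
    exact hBd.mk_le_of_isNet hsymm hultra hB hAn
  exact le_antisymm (csSup_le ⟨_, A, hA, hAd, rfl⟩ hbound)
    (le_csSup ⟨_, hbound⟩ ⟨A, hA, hAd, rfl⟩)

lemma coveringNumberIn_self_eq_mk (hA : A ⊆ W) (hAd : IsDistinguishable d ε A)
    (hAn : IsNet d ε W A) : coveringNumberIn d ε W W = #A := by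
  refine le_antisymm (csInf_le (OrderBot.bddBelow _) ⟨A, hA, hAn, rfl⟩)
    (le_csInf ⟨_, A, hA, hAn, rfl⟩ ?_)
  rintro _ ⟨C, -, hCn, rfl⟩
  exact hAd.mk_le_of_isNet hsymm hultra hA hCn

end Packing

section Product

variable {X Y : Type u} {dX : X → X → ℝ} {dY : Y → Y → ℝ} {ε : ℝ}

lemma IsDistinguishable.prod {A : Set X} {B : Set Y} (hA : IsDistinguishable dX ε A)
    (hB : IsDistinguishable dY ε B) :
    IsDistinguishable (fun p q => max (dX p.1 q.1) (dY p.2 q.2)) ε (A ×ˢ B) := by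
  rintro ⟨a₁, b₁⟩ ⟨ha₁, hb₁⟩ ⟨a₂, b₂⟩ ⟨ha₂, hb₂⟩ hne
  by_cases ha : a₁ = a₂
  · exact (hB b₁ hb₁ b₂ hb₂ fun hb => hne (Prod.ext ha hb)).trans_le (le_max_right _ _)
  · exact (hA a₁ ha₁ a₂ ha₂ ha).trans_le (le_max_left _ _)

lemma IsNet.prod {W A : Set X} {Z B : Set Y} (hA : IsNet dX ε W A) (hB : IsNet dY ε Z B) :
    IsNet (fun p q => max (dX p.1 q.1) (dY p.2 q.2)) ε (W ×ˢ Z) (A ×ˢ B) := by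
  rintro ⟨w, z⟩ ⟨hw, hz⟩
  obtain ⟨a, ha, hwa⟩ := hA w hw
  obtain ⟨b, hb, hzb⟩ := hB z hz
  exact ⟨(a, b), ⟨ha, hb⟩, max_le hwa hzb⟩

lemma eq_max_dist_of_partialDistPreserving [MetricSpace X] [MetricSpace Y]
    {d : X × Y → X × Y → ℝ} (hultra : IsUltrametricOn d) (hpdp : PartialDistPreserving d)
    (hlow : ∀ p q : X × Y, max (dist p.1 q.1) (dist p.2 q.2) ≤ d p q) :
    d = fun p q => max (dist p.1 q.1) (dist p.2 q.2) := by
  ext ⟨x₁, y₁⟩ ⟨x₂, y₂⟩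
  refine le_antisymm ?_ (hlow _ _)
  simpa only [hpdp.1, hpdp.2] using hultra (x₁, y₁) (x₂, y₁) (x₂, y₂)

end Product

theorem packing_covering_multiplicative_of_ultrametric_general {X Y : Type u} [MetricSpace X]
    [MetricSpace Y]
    (hX : ∀ x y z : X, dist x z ≤ max (dist x y) (dist y z))
    (hY : ∀ x y z : Y, dist x z ≤ max (dist x y) (dist y z))
    (d : X × Y → X × Y → ℝ) (hultra : IsUltrametricOn d)
    (hpdp : PartialDistPreserving d)
    (hlow : ∀ p q : X × Y, max (dist p.1 q.1) (dist p.2 q.2) ≤ d p q)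
    (W : Set X) (Z : Set Y) (ε : ℝ) (hε : 0 < ε) :
    packingNumberSup d ε (W ×ˢ Z) = packingNumberSup dist ε W * packingNumberSup dist ε Z ∧
      coveringNumberIn d ε (W ×ˢ Z) (W ×ˢ Z) =
        coveringNumberIn dist ε W W * coveringNumberIn dist ε Z Z ∧
      packingNumberSup d ε (W ×ˢ Z) = coveringNumberIn d ε (W ×ˢ Z) (W ×ˢ Z) := by
  obtain rfl := eq_max_dist_of_partialDistPreserving hultra hpdp hlow
  obtain ⟨A, hAW, hAd, hAn⟩ := exists_isDistinguishable_isNet dist_self dist_comm hε.le W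
  obtain ⟨B, hBZ, hBd, hBn⟩ := exists_isDistinguishable_isNet dist_self dist_comm hε.le Z
  have hsymm (p q : X × Y) :
      max (dist p.1 q.1) (dist p.2 q.2) = max (dist q.1 p.1) (dist q.2 p.2) := by
    simp only [dist_comm]
  have hABW := prod_mono hAW hBZ
  rw [packingNumberSup_eq_mk hsymm hultra hABW (hAd.prod hBd) (hAn.prod hBn),
    coveringNumberIn_self_eq_mk hsymm hultra hABW (hAd.prod hBd) (hAn.prod hBn),
    packingNumberSup_eq_mk dist_comm hX hAW hAd hAn,
    packingNumberSup_eq_mk dist_comm hY hBZ hBd hBn,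
    coveringNumberIn_self_eq_mk dist_comm hX hAW hAd hAn,
    coveringNumberIn_self_eq_mk dist_comm hY hBZ hBd hBn, mk_setProd]
  exact ⟨rfl, rfl, rfl⟩

/-- Lemma 3.2 (section 4): if `X`, `Y` are ultrametric spaces and `d` is a partial
distance-preserving ultrametric on `X × Y` with `d_∞ ≤ d`, then for all compact `W ⊆ X`,
`Z ⊆ Y` and all `ε > 0`: `M_ε(W × Z) = M_ε(W)·M_ε(Z)`, `N_ε(W × Z) = N_ε(W)·N_ε(Z)` and
`M_ε(W × Z) = N_ε(W × Z)`. -/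
theorem packing_covering_multiplicative_of_ultrametric {X Y : Type u} [MetricSpace X]
    [MetricSpace Y]
    (hX : ∀ x y z : X, dist x z ≤ max (dist x y) (dist y z))
    (hY : ∀ x y z : Y, dist x z ≤ max (dist x y) (dist y z))
    (d : X × Y → X × Y → ℝ) (hmetric : IsMetricOn d) (hultra : IsUltrametricOn d)
    (hpdp : PartialDistPreserving d)
    (hlow : ∀ p q : X × Y, max (dist p.1 q.1) (dist p.2 q.2) ≤ d p q)
    (W : Set X) (Z : Set Y) (hW : IsCompact W) (hZ : IsCompact Z) (ε : ℝ) (hε : 0 < ε) :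
    packingNumberSup d ε (W ×ˢ Z) = packingNumberSup dist ε W * packingNumberSup dist ε Z ∧
      coveringNumberIn d ε (W ×ˢ Z) (W ×ˢ Z) =
        coveringNumberIn dist ε W W * coveringNumberIn dist ε Z Z ∧
      packingNumberSup d ε (W ×ˢ Z) = coveringNumberIn d ε (W ×ˢ Z) (W ×ˢ Z) :=
  packing_covering_multiplicative_of_ultrametric_general hX hY d hultra hpdp hlow W Z ε hε
end

section
/- Let (X,d_X) and (Y,d_Y) be ultrametric spaces and let d be a partial distance-preserving metric on X × Y such that max{d_X(x₁,x₂), d_Y(y₁,y₂)} ≤ d((x₁,y₁),(x₂,y₂)) for all (x₁,y₁), (x₂,y₂) ∈ X × Y. Suppose that N_ε(W × Z) = N_ε(W) · N_ε(Z) holds for all compact sets W ⊆ X, Z ⊆ Y and every ε > 0 (covering numbers on W × Z computed with respect to d). Then min{d((x₁,y₁),(x₂,y₂)), d((x₂,y₁),(x₁,y₂))} = max{d_X(x₁,x₂), d_Y(y₁,y₂)} for all x₁, x₂ ∈ X and y₁, y₂ ∈ Y. -/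
/-! Put `m = max {d_X(x₁,x₂), d_Y(y₁,y₂)}` and let `ε > m`. Each of the two-point sets `{x₁, x₂}`
and `{y₁, y₂}` is covered by one ball of radius `ε`, so by multiplicativity so is the square
`{x₁, x₂} × {y₁, y₂}`, with a centre that is one of its corners. The distance from that corner to
the opposite one is one of the two diagonals, hence the smaller diagonal is `≤ ε`. The reverse
inequality is `d ≥ d_∞`. -/

open Cardinal Set

universe u

section CoveringNumber

variable {α : Type u} {d : α → α → ℝ} {ε : ℝ} {A W : Set α}

theorem coveringNumberIn_eq_one_iff :
    coveringNumberIn d ε A W = 1 ↔ W.Nonempty ∧ ∃ c ∈ A, ∀ w ∈ W, d w c ≤ ε := by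
  constructor
  · intro h
    have hnets : {κ | ∃ C ⊆ A, IsNet d ε W C ∧ #C = κ}.Nonempty := by
      by_contra hempty
      rw [not_nonempty_iff_eq_empty] at hempty
      simp [coveringNumberIn, hempty] at h
    have hmem : coveringNumberIn d ε A W ∈ {κ | ∃ C ⊆ A, IsNet d ε W C ∧ #C = κ} :=
      csInf_mem hnets
    rw [h] at hmem
    obtain ⟨C, hCA, hnet, hC⟩ := hmem
    obtain ⟨c, rfl⟩ := mk_set_eq_one_iff.1 hC
    refine ⟨nonempty_iff_ne_empty.2 fun hW => ?_, c, hCA rfl, fun w hw => ?_⟩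
    · have hzero : coveringNumberIn d ε A W ≤ 0 :=
        csInf_le' ⟨∅, empty_subset A, by simp [IsNet, hW], mk_eq_zero _⟩
      exact one_ne_zero (h ▸ nonpos_iff_eq_zero.1 hzero)
    · obtain ⟨c', rfl, hc'⟩ := hnet w hw
      exact hc'
  · rintro ⟨⟨w, hw⟩, c, hcA, hc⟩
    have hsingleton : (1 : Cardinal) ∈ {κ | ∃ C ⊆ A, IsNet d ε W C ∧ #C = κ} :=
      ⟨{c}, singleton_subset_iff.2 hcA, fun w hw => ⟨c, rfl, hc w hw⟩, mk_singleton c⟩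
    refine le_antisymm (csInf_le' hsingleton) (le_csInf ⟨1, hsingleton⟩ ?_)
    rintro κ ⟨C, -, hnet, rfl⟩
    obtain ⟨c', hc', -⟩ := hnet w hw
    exact Cardinal.one_le_iff_ne_zero.2 (mk_ne_zero_iff.2 ⟨⟨c', hc'⟩⟩)

end CoveringNumber

theorem coveringNumberIn_pair_eq_one {α : Type u} [PseudoMetricSpace α] {a b : α} {ε : ℝ}
    (h : dist a b ≤ ε) : coveringNumberIn dist ε ({a, b} : Set α) {a, b} = 1 :=
  coveringNumberIn_eq_one_iff.2 ⟨insert_nonempty a {b}, a, mem_insert a {b}, by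
    rintro w (rfl | rfl)
    · exact (dist_self w).trans_le (dist_nonneg.trans h)
    · rwa [dist_comm]⟩

theorem min_diagonal_le_of_forall_le_corner {X Y : Type*} {d : X × Y → X × Y → ℝ}
    (hsymm : ∀ p q, d p q = d q p) {x₁ x₂ : X} {y₁ y₂ : Y} {ε : ℝ} {c : X × Y}
    (hc : c ∈ ({x₁, x₂} : Set X) ×ˢ ({y₁, y₂} : Set Y))
    (hcε : ∀ w ∈ ({x₁, x₂} : Set X) ×ˢ ({y₁, y₂} : Set Y), d w c ≤ ε) :
    min (d (x₁, y₁) (x₂, y₂)) (d (x₂, y₁) (x₁, y₂)) ≤ ε := by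
  obtain ⟨a, b⟩ := c
  simp only [mem_prod, mem_insert_iff, mem_singleton_iff] at hc
  obtain ⟨ha | ha, hb | hb⟩ := hc <;> subst a b
  · exact (min_le_left _ _).trans (hsymm _ _ ▸ hcε (x₂, y₂) (by simp))
  · exact (min_le_right _ _).trans (hcε (x₂, y₁) (by simp))
  · exact (min_le_right _ _).trans (hsymm _ _ ▸ hcε (x₁, y₂) (by simp))
  · exact (min_le_left _ _).trans (hcε (x₁, y₁) (by simp))

theorem min_dist_eq_max_of_covering_multiplicative_general {X Y : Type u} [MetricSpace X]
    [MetricSpace Y]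
    (d : X × Y → X × Y → ℝ) (hmetric : IsMetricOn d)
    (hlow : ∀ p q : X × Y, max (dist p.1 q.1) (dist p.2 q.2) ≤ d p q)
    (hcov : ∀ (W : Set X) (Z : Set Y), IsCompact W → IsCompact Z → ∀ ε : ℝ, 0 < ε →
      coveringNumberIn d ε (W ×ˢ Z) (W ×ˢ Z) =
        coveringNumberIn dist ε W W * coveringNumberIn dist ε Z Z)
    (x₁ x₂ : X) (y₁ y₂ : Y) :
    min (d (x₁, y₁) (x₂, y₂)) (d (x₂, y₁) (x₁, y₂)) = max (dist x₁ x₂) (dist y₁ y₂) := by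
  have hlow' : max (dist x₁ x₂) (dist y₁ y₂) ≤ d (x₂, y₁) (x₁, y₂) := by
    simpa [dist_comm x₂ x₁] using hlow (x₂, y₁) (x₁, y₂)
  refine le_antisymm (le_of_forall_gt_imp_ge_of_dense fun ε hε => ?_)
    (le_min (hlow (x₁, y₁) (x₂, y₂)) hlow')
  have hε₀ : 0 < ε := (dist_nonneg.trans (le_max_left _ _)).trans_lt hε
  have hsquare : coveringNumberIn d ε (({x₁, x₂} : Set X) ×ˢ ({y₁, y₂} : Set Y))
      (({x₁, x₂} : Set X) ×ˢ ({y₁, y₂} : Set Y)) = 1 := by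
    rw [hcov _ _ (toFinite _).isCompact (toFinite _).isCompact ε hε₀,
      coveringNumberIn_pair_eq_one ((le_max_left _ _).trans hε.le),
      coveringNumberIn_pair_eq_one ((le_max_right _ _).trans hε.le), one_mul]
  obtain ⟨-, c, hc, hcε⟩ := coveringNumberIn_eq_one_iff.1 hsquare
  exact min_diagonal_le_of_forall_le_corner hmetric.2.2.1 hc hcε

/-- Proposition 3.7: for ultrametric spaces `X`, `Y` and a partial distance-preserving metric
`d ≥ d_∞` on `X × Y`, if the covering numbers are multiplicative on compact sets, then
`min {d((x₁,y₁),(x₂,y₂)), d((x₂,y₁),(x₁,y₂))} = max {d_X(x₁,x₂), d_Y(y₁,y₂)}`. -/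
theorem min_dist_eq_max_of_covering_multiplicative {X Y : Type u} [MetricSpace X]
    [MetricSpace Y]
    (hX : ∀ x y z : X, dist x z ≤ max (dist x y) (dist y z))
    (hY : ∀ x y z : Y, dist x z ≤ max (dist x y) (dist y z))
    (d : X × Y → X × Y → ℝ) (hmetric : IsMetricOn d) (hpdp : PartialDistPreserving d)
    (hlow : ∀ p q : X × Y, max (dist p.1 q.1) (dist p.2 q.2) ≤ d p q)
    (hcov : ∀ (W : Set X) (Z : Set Y), IsCompact W → IsCompact Z → ∀ ε : ℝ, 0 < ε →
      coveringNumberIn d ε (W ×ˢ Z) (W ×ˢ Z) =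
        coveringNumberIn dist ε W W * coveringNumberIn dist ε Z Z)
    (x₁ x₂ : X) (y₁ y₂ : Y) :
    min (d (x₁, y₁) (x₂, y₂)) (d (x₂, y₁) (x₁, y₂)) = max (dist x₁ x₂) (dist y₁ y₂) :=
  min_dist_eq_max_of_covering_multiplicative_general d hmetric hlow hcov x₁ x₂ y₁ y₂
end
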